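/- arXiv:1508.00952 — 2 statements merged into one kernel-verified Lean document; each statement's English description precedes it below -/
import Mathlib

section
/- Under the aggregated computational-graph setup, assume in addition that S is twice continuously differentiable (so f is C²) and that the Hessian ∇²f(x₀) is invertible. Let A = [∂_xΦ, ∂_sΦ − I] ∈ ℝ^{m×(n+m)} be the Jacobian of the constraint h(x,s) = Φ(x,s) − s at (x₀,s₀). Then the KKT system [[∇²_{(x,s)}L(x₀,s₀,λ₀), Aᵀ],[A, 0]] · [δx; δs; δλ] = [−∇_{(x,s)}L(x₀,s₀,λ₀); 0] has a unique solution (δx, δs, δλ), and its δx-component is exactly the Newton step of the unconstrained objective, i.e., ∇²f(x₀) · δx = −∇f(x₀). -/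
/-!
Along the graph `x ↦ (x, S x)` the constraint holds identically, so `f x = L (x, S x)` whatever
the multiplier. For the adjoint multiplier `∂ₛL = 0` at `(x₀, s₀)`, so the second-order chain rule
loses its `∂L · S''` term and `∇²f(x₀)` is `∇²L` restricted to the tangent space `{(u, S' u)}`,
which is the kernel of the constraint Jacobian. Splitting a test direction as
`(u, v) = (u, S' u) - (0, S' u - v)` decouples the KKT system into the Newton equation for `δx`,
`δs = S' δx`, and an adjoint equation for `δλ` with the invertible matrix `(I - ∂ₛΦ)ᵀ`.
-/

open Matrix

section Calculus

variable {𝕜 E F G : Type*} [NontriviallyNormedField 𝕜]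
  [NormedAddCommGroup E] [NormedSpace 𝕜 E] [NormedAddCommGroup F] [NormedSpace 𝕜 F]
  [NormedAddCommGroup G] [NormedSpace 𝕜 G]

theorem fderiv_fderiv_comp_apply {L : F → G} {ψ : E → F} (hL : ContDiff 𝕜 2 L)
    (hψ : ContDiff 𝕜 2 ψ) (x u v : E) :
    fderiv 𝕜 (fderiv 𝕜 (L ∘ ψ)) x u v =
      fderiv 𝕜 (fderiv 𝕜 L) (ψ x) (fderiv 𝕜 ψ x u) (fderiv 𝕜 ψ x v) +
        fderiv 𝕜 L (ψ x) (fderiv 𝕜 (fderiv 𝕜 ψ) x u v) := by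
  have hL' := (hL.fderiv_right (m := 1) le_rfl).differentiable one_ne_zero
  have hψ' := (hψ.fderiv_right (m := 1) le_rfl).differentiable one_ne_zero
  have h : fderiv 𝕜 (L ∘ ψ) = fun y => (fderiv 𝕜 L (ψ y)).comp (fderiv 𝕜 ψ y) :=
    funext fun y => fderiv_comp y (hL.differentiable two_ne_zero _)
      (hψ.differentiable two_ne_zero y)
  have hd : HasFDerivAt (fun y => (fderiv 𝕜 L (ψ y)).comp (fderiv 𝕜 ψ y)) _ x :=
    ((hL' _).hasFDerivAt.comp x (hψ.differentiable two_ne_zero x).hasFDerivAt).clm_comp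
      (hψ' x).hasFDerivAt
  rw [h, hd.fderiv]
  simp [add_comm]

theorem hasFDerivAt_graph {S : E → F} {S' : E →L[𝕜] F} {x : E} (hS : HasFDerivAt S S' x) :
    HasFDerivAt (fun y => (y, S y)) ((ContinuousLinearMap.id 𝕜 E).prod S') x :=
  (hasFDerivAt_id x).prodMk hS

theorem fderiv_graph_apply {S : E → F} {x : E} (hS : DifferentiableAt 𝕜 S x) (u : E) :
    fderiv 𝕜 (fun y => (y, S y)) x u = (u, fderiv 𝕜 S x u) := by
  simp [(hasFDerivAt_graph hS.hasFDerivAt).fderiv]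

theorem fderiv_fderiv_graph_apply {S : E → F} (hS : ContDiff 𝕜 2 S) (x u v : E) :
    fderiv 𝕜 (fderiv 𝕜 fun y => (y, S y)) x u v = (0, fderiv 𝕜 (fderiv 𝕜 S) x u v) := by
  have hS' := (hS.fderiv_right (m := 1) le_rfl).differentiable one_ne_zero
  have h : (fderiv 𝕜 fun y => (y, S y)) = fun y =>
      ContinuousLinearMap.inl 𝕜 E F + (ContinuousLinearMap.inr 𝕜 E F).comp (fderiv 𝕜 S y) := by
    funext y
    ext1 w
    simp [fderiv_graph_apply (hS.differentiable two_ne_zero y)]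
  have hd : HasFDerivAt (fun y =>
      ContinuousLinearMap.inl 𝕜 E F + (ContinuousLinearMap.inr 𝕜 E F).comp (fderiv 𝕜 S y)) _ x :=
    (hasFDerivAt_const _ x).add ((hasFDerivAt_const _ x).clm_comp (hS' x).hasFDerivAt)
  rw [h, hd.fderiv]
  simp

theorem fderiv_apply_eq_of_eq_comp_graph {S : E → F} {Φ : E × F → F} {x : E}
    (hrec : ∀ y, S y = Φ (y, S y)) (hΦ : DifferentiableAt 𝕜 Φ (x, S x))
    (hS : DifferentiableAt 𝕜 S x) (u : E) :
    fderiv 𝕜 S x u = fderiv 𝕜 Φ (x, S x) (u, fderiv 𝕜 S x u) := by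
  have hd : HasFDerivAt (fun y => Φ (y, S y)) _ x :=
    hΦ.hasFDerivAt.comp x (hasFDerivAt_graph hS.hasFDerivAt)
  rw [← funext hrec] at hd
  conv_lhs => rw [hd.fderiv]
  rfl

theorem fderiv_add_comp_sub_snd_apply {g : E × F → G} {Φ : E × F → F} {p : E × F}
    (c : F →L[𝕜] G) (hg : DifferentiableAt 𝕜 g p) (hΦ : DifferentiableAt 𝕜 Φ p) (w : E × F) :
    fderiv 𝕜 (fun q => g q + c (Φ q - q.2)) p w = fderiv 𝕜 g p w + c (fderiv 𝕜 Φ p w - w.2) := by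
  have hd : HasFDerivAt (fun q => g q + c (Φ q - q.2)) _ p :=
    hg.hasFDerivAt.add (c.hasFDerivAt.comp p (hΦ.hasFDerivAt.sub hasFDerivAt_snd))
  rw [hd.fderiv]
  simp

theorem fderiv_comp_graph_apply {L : E × F → G} {S : E → F} {x : E}
    (hL : DifferentiableAt 𝕜 L (x, S x)) (hS : DifferentiableAt 𝕜 S x) (u : E) :
    fderiv 𝕜 (fun y => L (y, S y)) x u = fderiv 𝕜 L (x, S x) (u, fderiv 𝕜 S x u) := by
  have hd : HasFDerivAt (fun y => L (y, S y)) _ x :=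
    hL.hasFDerivAt.comp x (hasFDerivAt_graph hS.hasFDerivAt)
  rw [hd.fderiv]
  rfl

theorem fderiv_fderiv_comp_graph_apply {L : E × F → G} {S : E → F} {x : E}
    (hL : ContDiff 𝕜 2 L) (hS : ContDiff 𝕜 2 S) (hstat : ∀ v, fderiv 𝕜 L (x, S x) (0, v) = 0)
    (u v : E) :
    fderiv 𝕜 (fderiv 𝕜 fun y => L (y, S y)) x u v =
      fderiv 𝕜 (fderiv 𝕜 L) (x, S x) (u, fderiv 𝕜 S x u) (v, fderiv 𝕜 S x v) := by
  have hS1 := hS.differentiable two_ne_zero x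
  have hgraph : ContDiff 𝕜 2 fun y => (y, S y) := contDiff_id.prodMk hS
  rw [show (fun y => L (y, S y)) = L ∘ fun y => (y, S y) from rfl,
    fderiv_fderiv_comp_apply hL hgraph, fderiv_fderiv_graph_apply hS, hstat,
    add_zero, fderiv_graph_apply hS1, fderiv_graph_apply hS1]

end Calculus

theorem existsUnique_forall_dotProduct_mulVec_eq {R κ : Type*} [CommRing R] [Fintype κ]
    [DecidableEq κ] {M : Matrix κ κ R} (hM : IsUnit M) (e : Module.Dual R (κ → R)) :
    ∃! y : κ → R, ∀ v, y ⬝ᵥ M *ᵥ v = e v := by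
  have key : ∀ y : κ → R, (∀ v, y ⬝ᵥ M *ᵥ v = e v) ↔ y ᵥ* M = (dotProductEquiv R κ).symm e := by
    intro y
    rw [← dotProduct_eq_iff]
    simp_rw [dotProduct_mulVec, ← dotProductEquiv_apply_apply, LinearEquiv.apply_symm_apply]
  simp_rw [key]
  exact Function.Bijective.existsUnique
    ⟨vecMul_injective_of_isUnit hM, vecMul_surjective_iff_isUnit.mpr hM⟩ _

section KKT

variable {ι κ : Type*} [Fintype ι]
  {B : (ι → ℝ) × (κ → ℝ) →L[ℝ] (ι → ℝ) × (κ → ℝ) →L[ℝ] ℝ} {ℓ : (ι → ℝ) × (κ → ℝ) →L[ℝ] ℝ}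
  {J : (ι → ℝ) →L[ℝ] (κ → ℝ)} {Hf : Matrix ι ι ℝ} {gf : ι → ℝ}

theorem forall_tangent_stationary_iff (hHf : ∀ u v, u ⬝ᵥ Hf *ᵥ v = B (u, J u) (v, J v))
    (hgf : ∀ u, gf ⬝ᵥ u = ℓ (u, J u)) (dx : ι → ℝ) :
    (∀ u, B (u, J u) (dx, J dx) = -ℓ (u, J u)) ↔ Hf *ᵥ dx = -gf := by
  simp_rw [← hHf, ← hgf, ← dotProduct_eq_iff (v := Hf *ᵥ dx), dotProduct_comm _ (Hf *ᵥ dx),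
    neg_dotProduct]

variable [Fintype κ]

variable (B ℓ) in
/-- The system `[[B, Aᵀ], [A, 0]] (δx, δs, δλ) = (-ℓ, 0)` with `A = [Φx, Φs - I]`, its first
block row tested against all directions `(u, v)`. -/
def IsKKTSolution (Φx : Matrix κ ι ℝ) (Φs : Matrix κ κ ℝ) (p : (ι → ℝ) × (κ → ℝ) × (κ → ℝ)) :
    Prop :=
  (∀ u v, B (u, v) (p.1, p.2.1) + p.2.2 ⬝ᵥ (Φx *ᵥ u + Φs *ᵥ v - v) = -ℓ (u, v)) ∧
    Φx *ᵥ p.1 + Φs *ᵥ p.2.1 - p.2.1 = 0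

variable [DecidableEq κ] {Φx : Matrix κ ι ℝ} {Φs : Matrix κ κ ℝ}

theorem constraint_eq_mulVec_sub (hJ : ∀ u, Φx *ᵥ u + Φs *ᵥ J u = J u) (u : ι → ℝ)
    (v : κ → ℝ) : Φx *ᵥ u + Φs *ᵥ v - v = (1 - Φs) *ᵥ (J u - v) := by
  rw [sub_mulVec, one_mulVec, mulVec_sub]
  linear_combination (hJ u)

theorem constraint_eq_zero_iff (hJ : ∀ u, Φx *ᵥ u + Φs *ᵥ J u = J u) (hI : IsUnit (1 - Φs))
    (u : ι → ℝ) (v : κ → ℝ) : Φx *ᵥ u + Φs *ᵥ v - v = 0 ↔ v = J u := by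
  rw [constraint_eq_mulVec_sub hJ, ← mulVec_zero (1 - Φs),
    (mulVec_injective_of_isUnit hI).eq_iff, sub_eq_zero, eq_comm]

theorem kkt_stationarity_iff (hJ : ∀ u, Φx *ᵥ u + Φs *ᵥ J u = J u)
    (hℓ : ∀ v, ℓ (0, v) = 0) (q : (ι → ℝ) × (κ → ℝ)) (dl : κ → ℝ) :
    (∀ u v, B (u, v) q + dl ⬝ᵥ (Φx *ᵥ u + Φs *ᵥ v - v) = -ℓ (u, v)) ↔
      (∀ u, B (u, J u) q = -ℓ (u, J u)) ∧ ∀ v, dl ⬝ᵥ (1 - Φs) *ᵥ v = B (0, v) q := by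
  simp_rw [constraint_eq_mulVec_sub hJ]
  constructor
  · intro h
    refine ⟨fun u => by simpa using h u (J u), fun v => ?_⟩
    have := h 0 v
    simp only [map_zero, zero_sub, mulVec_neg, dotProduct_neg, hℓ] at this
    linarith
  · rintro ⟨htan, hadj⟩ u v
    have hsplit : ((u, v) : (ι → ℝ) × (κ → ℝ)) = (u, J u) - (0, J u - v) := by simp
    rw [hsplit, B.map_sub₂, ℓ.map_sub, hℓ, htan, hadj]
    ring

theorem isKKTSolution_iff (hJ : ∀ u, Φx *ᵥ u + Φs *ᵥ J u = J u) (hI : IsUnit (1 - Φs))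
    (hℓ : ∀ v, ℓ (0, v) = 0) (hHf : ∀ u v, u ⬝ᵥ Hf *ᵥ v = B (u, J u) (v, J v))
    (hgf : ∀ u, gf ⬝ᵥ u = ℓ (u, J u)) (p : (ι → ℝ) × (κ → ℝ) × (κ → ℝ)) :
    IsKKTSolution B ℓ Φx Φs p ↔
      Hf *ᵥ p.1 = -gf ∧ p.2.1 = J p.1 ∧ ∀ v, p.2.2 ⬝ᵥ (1 - Φs) *ᵥ v = B (0, v) (p.1, p.2.1) := by
  obtain ⟨dx, ds, dl⟩ := p
  rw [IsKKTSolution, kkt_stationarity_iff hJ hℓ, constraint_eq_zero_iff hJ hI]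
  dsimp only
  constructor
  · rintro ⟨⟨htan, hadj⟩, rfl⟩
    exact ⟨(forall_tangent_stationary_iff hHf hgf dx).1 htan, rfl, hadj⟩
  · rintro ⟨hnewton, rfl, hadj⟩
    exact ⟨⟨(forall_tangent_stationary_iff hHf hgf dx).2 hnewton, hadj⟩, rfl⟩

theorem existsUnique_isKKTSolution [DecidableEq ι] (hJ : ∀ u, Φx *ᵥ u + Φs *ᵥ J u = J u)
    (hI : IsUnit (1 - Φs)) (hℓ : ∀ v, ℓ (0, v) = 0)
    (hHf : ∀ u v, u ⬝ᵥ Hf *ᵥ v = B (u, J u) (v, J v)) (hgf : ∀ u, gf ⬝ᵥ u = ℓ (u, J u))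
    (hHfinv : IsUnit Hf) : ∃! p, IsKKTSolution B ℓ Φx Φs p := by
  simp_rw [isKKTSolution_iff hJ hI hℓ hHf hgf]
  obtain ⟨dx, hdx, hdx_unique⟩ := Function.Bijective.existsUnique
    ⟨mulVec_injective_of_isUnit hHfinv, mulVec_surjective_iff_isUnit.mpr hHfinv⟩ (-gf)
  obtain ⟨dl, hdl, hdl_unique⟩ := existsUnique_forall_dotProduct_mulVec_eq hI
    ((B.flip (dx, J dx)).comp (ContinuousLinearMap.inr ℝ (ι → ℝ) (κ → ℝ)) : (κ → ℝ) →ₗ[ℝ] ℝ)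
  refine ⟨(dx, J dx, dl), ⟨hdx, rfl, fun v => hdl v⟩, ?_⟩
  rintro ⟨dx', ds', dl'⟩ ⟨hdx', hds', hdl'⟩
  obtain rfl := hdx_unique dx' hdx'
  obtain rfl : ds' = J dx' := hds'
  obtain rfl := hdl_unique dl' hdl'
  rfl

end KKT

/-- Theorem 1 of the paper (aggregated form): at a feasible point, with the
Lagrange multipliers set to the reverse-mode AD adjoints, the KKT system of the
constrained reformulation has a unique solution whose input component is the
Newton step of the unconstrained objective. -/
theorem newton_step_eq_lagrange_newton_step
    (n m : ℕ)
    (g : (Fin n → ℝ) × (Fin m → ℝ) → ℝ)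
    (Φ : (Fin n → ℝ) × (Fin m → ℝ) → (Fin m → ℝ))
    (S : (Fin n → ℝ) → (Fin m → ℝ))
    (f : (Fin n → ℝ) → ℝ)
    (L : (Fin n → ℝ) × (Fin m → ℝ) → ℝ)
    (x₀ : Fin n → ℝ) (s₀ : Fin m → ℝ) (lam₀ : Fin m → ℝ)
    (Φx : Matrix (Fin m) (Fin n) ℝ) (Φs : Matrix (Fin m) (Fin m) ℝ)
    (gf : Fin n → ℝ) (Hf : Matrix (Fin n) (Fin n) ℝ)
    (hg : ContDiff ℝ 2 g) (hΦ : ContDiff ℝ 2 Φ)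
    (hS : ContDiff ℝ 2 S)
    (hrec : ∀ x, S x = Φ (x, S x))
    (hf : ∀ x, f x = g (x, S x))
    (hs₀ : s₀ = S x₀)
    (hΦx : ∀ (u : Fin n → ℝ) (v : Fin m → ℝ),
      fderiv ℝ Φ (x₀, s₀) (u, v) = Φx.mulVec u + Φs.mulVec v)
    (hIinv : IsUnit (1 - Φs))
    (hlam₀ : ∀ v : Fin m → ℝ,
      ((1 - Φs)ᵀ.mulVec lam₀) ⬝ᵥ v = fderiv ℝ g (x₀, s₀) (0, v))
    (hL : ∀ p : (Fin n → ℝ) × (Fin m → ℝ), L p = g p + lam₀ ⬝ᵥ (Φ p - p.2))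
    (hgf : ∀ u : Fin n → ℝ, fderiv ℝ f x₀ u = gf ⬝ᵥ u)
    (hHf : ∀ u v : Fin n → ℝ,
      iteratedFDeriv ℝ 2 f x₀ ![u, v] = u ⬝ᵥ Hf.mulVec v)
    (hHfinv : IsUnit Hf) :
    (∃! p : (Fin n → ℝ) × (Fin m → ℝ) × (Fin m → ℝ),
      (∀ (u : Fin n → ℝ) (v : Fin m → ℝ),
        iteratedFDeriv ℝ 2 L (x₀, s₀) ![(u, v), (p.1, p.2.1)]
          + p.2.2 ⬝ᵥ (Φx.mulVec u + Φs.mulVec v - v)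
          = - fderiv ℝ L (x₀, s₀) (u, v))
      ∧ Φx.mulVec p.1 + Φs.mulVec p.2.1 - p.2.1 = 0)
    ∧ (∀ p : (Fin n → ℝ) × (Fin m → ℝ) × (Fin m → ℝ),
      ((∀ (u : Fin n → ℝ) (v : Fin m → ℝ),
        iteratedFDeriv ℝ 2 L (x₀, s₀) ![(u, v), (p.1, p.2.1)]
          + p.2.2 ⬝ᵥ (Φx.mulVec u + Φs.mulVec v - v)
          = - fderiv ℝ L (x₀, s₀) (u, v))
      ∧ Φx.mulVec p.1 + Φs.mulVec p.2.1 - p.2.1 = 0) →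
      Hf.mulVec p.1 = -gf) := by
  subst hs₀
  obtain rfl : f = fun x => L (x, S x) := funext fun x => by
    rw [hf, hL, ← hrec, sub_self, dotProduct_zero, add_zero]
  set c : (Fin m → ℝ) →L[ℝ] ℝ :=
    LinearMap.toContinuousLinearMap (dotProductEquiv ℝ (Fin m) lam₀)
  have hLc : L = fun p => g p + c (Φ p - p.2) := funext fun p => by simp [c, hL]
  have hL2 : ContDiff ℝ 2 L := hLc ▸ hg.add (c.contDiff.comp (hΦ.sub contDiff_snd))
  have hstat : ∀ v, fderiv ℝ L (x₀, S x₀) (0, v) = 0 := by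
    intro v
    rw [hLc, fderiv_add_comp_sub_snd_apply c (hg.differentiable two_ne_zero _)
      (hΦ.differentiable two_ne_zero _), hΦx, ← hlam₀, dotProduct_comm,
      dotProduct_transpose_mulVec]
    simp [c, sub_mulVec]
  have hJ : ∀ u, Φx *ᵥ u + Φs *ᵥ fderiv ℝ S x₀ u = fderiv ℝ S x₀ u := fun u => by
    rw [← hΦx, ← fderiv_apply_eq_of_eq_comp_graph hrec (hΦ.differentiable two_ne_zero _)
      (hS.differentiable two_ne_zero _)]
  have hgf' : ∀ u, gf ⬝ᵥ u = fderiv ℝ L (x₀, S x₀) (u, fderiv ℝ S x₀ u) := fun u => by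
    rw [← hgf, fderiv_comp_graph_apply (hL2.differentiable two_ne_zero _)
      (hS.differentiable two_ne_zero _)]
  have hHf' : ∀ u v, u ⬝ᵥ Hf *ᵥ v = fderiv ℝ (fderiv ℝ L) (x₀, S x₀)
      (u, fderiv ℝ S x₀ u) (v, fderiv ℝ S x₀ v) := fun u v => by
    rw [← hHf, iteratedFDeriv_two_apply, fderiv_fderiv_comp_graph_apply hL2 hS hstat]
    rfl
  simp only [iteratedFDeriv_two_apply, Matrix.cons_val_zero, Matrix.cons_val_one]
  exact ⟨existsUnique_isKKTSolution hJ hIinv hstat hHf' hgf' hHfinv,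
    fun p hp => ((isKKTSolution_iff hJ hIinv hstat hHf' hgf' p).1 hp).1⟩
end

section
/- Under the aggregated computational-graph setup, the adjoint multiplier λ₀ makes the Lagrangian stationary in the intermediate states and reproduces the gradient of the objective in the inputs: ∇_s L(x₀, s₀, λ₀) = 0, and ∇_x L(x₀, s₀, λ₀) = ∇f(x₀); equivalently, ∇f(x₀) = ∇_x g(x₀,s₀) + (∂_xΦ)ᵀ λ₀. -/
/-!
On the constraint set `s = S x` the penalty `Φ (x, s) - s` vanishes, so `L (x, S x) = f x` for
every `x`, whatever the multiplier. The chain rule then gives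
`Df u = ∂L (u, DS u) = ∂ₓL u + ∂ₛL (DS u)`. The adjoint equation `(1 - Φs)ᵀ λ₀ = ∇ₛg` says
precisely that `∂ₛL = ∂ₛg + λ₀ ⬝ᵥ (Φs · - ·)` vanishes, so `Df = ∂ₓL = ∂ₓg + Φxᵀ λ₀`.
-/

open Matrix

section Lagrangian

variable {E ι : Type*} [Fintype ι]

def lagrangian (g : E × (ι → ℝ) → ℝ) (Φ : E × (ι → ℝ) → ι → ℝ) (lam : ι → ℝ)
    (p : E × (ι → ℝ)) : ℝ :=
  g p + lam ⬝ᵥ (Φ p - p.2)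

theorem lagrangian_prodMk_of_apply_eq {g : E × (ι → ℝ) → ℝ} {Φ : E × (ι → ℝ) → ι → ℝ}
    (lam : ι → ℝ) {x : E} {s : ι → ℝ} (hs : Φ (x, s) = s) :
    lagrangian g Φ lam (x, s) = g (x, s) := by
  simp [lagrangian, hs]

variable [NormedAddCommGroup E] [NormedSpace ℝ E] {g : E × (ι → ℝ) → ℝ}
  {Φ : E × (ι → ℝ) → ι → ℝ} {p : E × (ι → ℝ)}

theorem hasFDerivAt_lagrangian {g' : E × (ι → ℝ) →L[ℝ] ℝ} {Φ' : E × (ι → ℝ) →L[ℝ] ι → ℝ}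
    (hg : HasFDerivAt g g' p) (hΦ : HasFDerivAt Φ Φ' p) (lam : ι → ℝ) :
    HasFDerivAt (lagrangian g Φ lam)
      (g' + (dotProductBilin ℝ ℝ lam).toContinuousLinearMap.comp
        (Φ' - ContinuousLinearMap.snd ℝ E (ι → ℝ))) p :=
  hg.add <| (dotProductBilin ℝ ℝ lam).toContinuousLinearMap.hasFDerivAt.comp p
    (hΦ.sub hasFDerivAt_snd)

theorem differentiableAt_lagrangian (hg : DifferentiableAt ℝ g p) (hΦ : DifferentiableAt ℝ Φ p)
    (lam : ι → ℝ) : DifferentiableAt ℝ (lagrangian g Φ lam) p :=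
  (hasFDerivAt_lagrangian hg.hasFDerivAt hΦ.hasFDerivAt lam).differentiableAt

theorem fderiv_lagrangian_apply (hg : DifferentiableAt ℝ g p) (hΦ : DifferentiableAt ℝ Φ p)
    (lam : ι → ℝ) (w : E × (ι → ℝ)) :
    fderiv ℝ (lagrangian g Φ lam) p w = fderiv ℝ g p w + lam ⬝ᵥ (fderiv ℝ Φ p w - w.2) := by
  rw [(hasFDerivAt_lagrangian hg.hasFDerivAt hΦ.hasFDerivAt lam).fderiv]
  rfl

end Lagrangian

theorem fderiv_comp_prodMk_apply {E F G : Type*} [NormedAddCommGroup E] [NormedSpace ℝ E]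
    [NormedAddCommGroup F] [NormedSpace ℝ F] [NormedAddCommGroup G] [NormedSpace ℝ G]
    {g : E × F → G} {S : E → F} {x : E}
    (hg : DifferentiableAt ℝ g (x, S x)) (hS : DifferentiableAt ℝ S x) (u : E) :
    fderiv ℝ (fun y => g (y, S y)) x u = fderiv ℝ g (x, S x) (u, fderiv ℝ S x u) := by
  have h : HasFDerivAt (fun y => g (y, S y))
      ((fderiv ℝ g (x, S x)).comp ((ContinuousLinearMap.id ℝ E).prod (fderiv ℝ S x))) x :=
    hg.hasFDerivAt.comp x ((hasFDerivAt_id x).prodMk hS.hasFDerivAt)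
  rw [h.fderiv]
  rfl

theorem map_prodMk_eq_add {M N P F : Type*} [AddZeroClass M] [AddZeroClass N] [AddZeroClass P]
    [FunLike F (M × N) P] [AddHomClass F (M × N) P] (T : F) (u : M) (v : N) :
    T (u, v) = T (u, 0) + T (0, v) := by
  rw [← map_add, Prod.mk_add_mk, add_zero, zero_add]

theorem reverse_ad_adjoints_stationary_general
    (n m : ℕ)
    (g : (Fin n → ℝ) × (Fin m → ℝ) → ℝ)
    (Φ : (Fin n → ℝ) × (Fin m → ℝ) → (Fin m → ℝ))
    (S : (Fin n → ℝ) → (Fin m → ℝ))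
    (f : (Fin n → ℝ) → ℝ)
    (L : (Fin n → ℝ) × (Fin m → ℝ) → ℝ)
    (x₀ : Fin n → ℝ) (s₀ : Fin m → ℝ) (lam₀ : Fin m → ℝ)
    (Φx : Matrix (Fin m) (Fin n) ℝ) (Φs : Matrix (Fin m) (Fin m) ℝ)
    (hg : ContDiff ℝ 2 g) (hΦ : ContDiff ℝ 2 Φ)
    (hS : Differentiable ℝ S)
    (hrec : ∀ x, S x = Φ (x, S x))
    (hf : ∀ x, f x = g (x, S x))
    (hs₀ : s₀ = S x₀)
    (hΦx : ∀ (u : Fin n → ℝ) (v : Fin m → ℝ),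
      fderiv ℝ Φ (x₀, s₀) (u, v) = Φx.mulVec u + Φs.mulVec v)
    (hlam₀ : ∀ v : Fin m → ℝ,
      ((1 - Φs)ᵀ.mulVec lam₀) ⬝ᵥ v = fderiv ℝ g (x₀, s₀) (0, v))
    (hL : ∀ p : (Fin n → ℝ) × (Fin m → ℝ), L p = g p + lam₀ ⬝ᵥ (Φ p - p.2)) :
    (∀ v : Fin m → ℝ, fderiv ℝ L (x₀, s₀) (0, v) = 0)
    ∧ (∀ u : Fin n → ℝ, fderiv ℝ L (x₀, s₀) (u, 0) = fderiv ℝ f x₀ u)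
    ∧ (∀ u : Fin n → ℝ,
        fderiv ℝ f x₀ u = fderiv ℝ g (x₀, s₀) (u, 0) + (Φx.mulVec u) ⬝ᵥ lam₀) := by
  obtain rfl : L = lagrangian g Φ lam₀ := funext hL
  subst hs₀
  have hgd : DifferentiableAt ℝ g (x₀, S x₀) := hg.differentiable two_ne_zero _
  have hΦd : DifferentiableAt ℝ Φ (x₀, S x₀) := hΦ.differentiable two_ne_zero _
  have hDL := fderiv_lagrangian_apply hgd hΦd lam₀
  have stationary (v : Fin m → ℝ) : fderiv ℝ (lagrangian g Φ lam₀) (x₀, S x₀) (0, v) = 0 := by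
    rw [hDL, ← hlam₀, hΦx, mulVec_zero, zero_add, mulVec_transpose, ← dotProduct_mulVec,
      sub_mulVec, one_mulVec, ← dotProduct_add, sub_add_sub_cancel, sub_self, dotProduct_zero]
  have inputs (u : Fin n → ℝ) :
      fderiv ℝ (lagrangian g Φ lam₀) (x₀, S x₀) (u, 0) = fderiv ℝ f x₀ u := by
    have hfL : f = fun x => lagrangian g Φ lam₀ (x, S x) :=
      funext fun x => by rw [hf, lagrangian_prodMk_of_apply_eq lam₀ (hrec x).symm]
    rw [hfL, fderiv_comp_prodMk_apply (differentiableAt_lagrangian hgd hΦd lam₀) (hS x₀),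
      map_prodMk_eq_add _ u (fderiv ℝ S x₀ u), stationary, add_zero]
  refine ⟨stationary, inputs, fun u => ?_⟩
  rw [← inputs u, hDL, hΦx, mulVec_zero, add_zero, sub_zero, dotProduct_comm]

/-- Correctness of reverse-mode AD (aggregated): the adjoint multipliers make the
Lagrangian stationary in the intermediate states and reproduce the gradient of the
objective in the inputs. -/
theorem reverse_ad_adjoints_stationary
    (n m : ℕ)
    (g : (Fin n → ℝ) × (Fin m → ℝ) → ℝ)
    (Φ : (Fin n → ℝ) × (Fin m → ℝ) → (Fin m → ℝ))
    (S : (Fin n → ℝ) → (Fin m → ℝ))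
    (f : (Fin n → ℝ) → ℝ)
    (L : (Fin n → ℝ) × (Fin m → ℝ) → ℝ)
    (x₀ : Fin n → ℝ) (s₀ : Fin m → ℝ) (lam₀ : Fin m → ℝ)
    (Φx : Matrix (Fin m) (Fin n) ℝ) (Φs : Matrix (Fin m) (Fin m) ℝ)
    (hg : ContDiff ℝ 2 g) (hΦ : ContDiff ℝ 2 Φ)
    (hS : Differentiable ℝ S)
    (hrec : ∀ x, S x = Φ (x, S x))
    (hf : ∀ x, f x = g (x, S x))
    (hs₀ : s₀ = S x₀)
    (hΦx : ∀ (u : Fin n → ℝ) (v : Fin m → ℝ),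
      fderiv ℝ Φ (x₀, s₀) (u, v) = Φx.mulVec u + Φs.mulVec v)
    (hIinv : IsUnit (1 - Φs))
    (hlam₀ : ∀ v : Fin m → ℝ,
      ((1 - Φs)ᵀ.mulVec lam₀) ⬝ᵥ v = fderiv ℝ g (x₀, s₀) (0, v))
    (hL : ∀ p : (Fin n → ℝ) × (Fin m → ℝ), L p = g p + lam₀ ⬝ᵥ (Φ p - p.2)) :
    (∀ v : Fin m → ℝ, fderiv ℝ L (x₀, s₀) (0, v) = 0)
    ∧ (∀ u : Fin n → ℝ, fderiv ℝ L (x₀, s₀) (u, 0) = fderiv ℝ f x₀ u)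
    ∧ (∀ u : Fin n → ℝ,
        fderiv ℝ f x₀ u = fderiv ℝ g (x₀, s₀) (u, 0) + (Φx.mulVec u) ⬝ᵥ lam₀) :=
  reverse_ad_adjoints_stationary_general n m g Φ S f L x₀ s₀ lam₀ Φx Φs hg hΦ hS hrec hf hs₀ hΦx
    hlam₀ hL
end
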